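/- (Quantitative Corollary 1, second part) Let h ∈ ℝⁿ with |h_i| ≤ 1 for every i, and let ε ≥ 0. Suppose the gates are within ε of constant 0/1 vectors, i.e. one of the following four cases holds for all i: (a) u(h)_i ≤ ε; (b) u(h)_i ≥ 1 − ε and r(h)_i ≤ ε; (c) u(h)_i ≥ 1 − ε and r(h)_i ≥ 1 − ε; (d) u(h)_i ≤ ε and r(h)_i ≥ 1 − ε or r(h)_i ≤ ε. Then the constants α = δ_u (max_i |h_i| + max_i |c(h)_i|) ‖U_u‖₂ + max_i (1 − u(h)_i) and β = (max_i u(h)_i)(δ_r ‖U_r‖₂ max_i |h_i| + max_i r(h)_i), with δ_u = max_i u(h)_i (1 − u(h)_i) and δ_r = max_i r(h)_i (1 − r(h)_i), satisfy α + β ≤ 1 + ε (2‖U_u‖₂ + ‖U_r‖₂ + 2). -/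

import Mathlib

noncomputable section

/-- The sigmoid function `σ(t) = 1/(1+exp(-t))`. -/
def sigmoid (t : ℝ) : ℝ := 1 / (1 + Real.exp (-t))

/-- The operator norm of a square matrix induced by the Euclidean norm. -/
def opNorm2 {n : ℕ} (M : Matrix (Fin n) (Fin n) ℝ) : ℝ :=
  ‖Matrix.toEuclideanCLM (𝕜 := ℝ) M‖

/-!
A sigmoid value `p` within `ε` of `0` or `1` has `p (1 - p) ≤ ε`. Since every gate `u(h)_i` is near
`0` or `1`, `δ_u ≤ ε`, and as `|h_i|, |c(h)_i| ≤ 1` the first term of `α` is at most `2ε‖U_u‖₂`.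
The rest is at most `1 + ε (‖U_r‖₂ + 1)`: if `u(h) ≤ ε`, the factor `max_i u(h)_i` of `β` is at
most `ε`; if `u(h) ≥ 1 - ε`, then `max_i (1 - u(h)_i) ≤ ε` and, `r(h)` being near `0` or `1`,
`δ_r ≤ ε`.
-/

open Set

lemma sigmoid_eq_real_sigmoid : sigmoid = Real.sigmoid := by
  funext t
  rw [sigmoid, Real.sigmoid_def, one_div]

lemma sigmoid_mem_Icc (t : ℝ) : sigmoid t ∈ Icc (0 : ℝ) 1 := by
  rw [sigmoid_eq_real_sigmoid]
  exact ⟨Real.sigmoid_nonneg t, Real.sigmoid_le_one t⟩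

lemma abs_tanh_mem_Icc (t : ℝ) : |Real.tanh t| ∈ Icc (0 : ℝ) 1 :=
  ⟨abs_nonneg _, (Real.abs_tanh_lt_one t).le⟩

lemma mul_one_sub_mem_Icc {p ε : ℝ} (hp : p ∈ Icc (0 : ℝ) 1) (hnear : p ≤ ε ∨ 1 - ε ≤ p) :
    p * (1 - p) ∈ Icc 0 ε := by
  obtain ⟨hp0, hp1⟩ := hp
  refine ⟨mul_nonneg hp0 (sub_nonneg.mpr hp1), ?_⟩
  rcases hnear with hnear | hnear <;> nlinarith

/-- No boundedness or nonemptiness is needed: an empty real supremum is `0`. -/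
lemma iSup_mem_Icc_zero {ι : Sort*} {f : ι → ℝ} {b : ℝ} (hb : 0 ≤ b)
    (hf : ∀ i, f i ∈ Icc 0 b) : ⨆ i, f i ∈ Icc 0 b :=
  ⟨Real.iSup_nonneg fun i => (hf i).1, Real.iSup_le (fun i => (hf i).2) hb⟩

lemma alpha_add_beta_le_of_bounds {Nu Nr Sh Sc δu δr su sr s1 ε : ℝ} (hNu : 0 ≤ Nu) (hNr : 0 ≤ Nr)
    (hSh : Sh ∈ Icc (0 : ℝ) 1) (hSc : Sc ∈ Icc (0 : ℝ) 1) (hδu : δu ∈ Icc 0 ε)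
    (hδr : δr ∈ Icc (0 : ℝ) 1) (hsu : su ∈ Icc (0 : ℝ) 1) (hsr : sr ∈ Icc (0 : ℝ) 1)
    (hs1 : s1 ≤ 1) (hregime : su ≤ ε ∨ (s1 ≤ ε ∧ δr ≤ ε)) :
    δu * (Sh + Sc) * Nu + s1 + su * (δr * Nr * Sh + sr) ≤ 1 + ε * (2 * Nu + Nr + 2) := by
  obtain ⟨hSh0, hSh1⟩ := hSh
  obtain ⟨hSc0, hSc1⟩ := hSc
  obtain ⟨hδu0, hδuε⟩ := hδu
  obtain ⟨hδr0, hδr1⟩ := hδr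
  obtain ⟨hsu0, hsu1⟩ := hsu
  obtain ⟨hsr0, hsr1⟩ := hsr
  have hε : 0 ≤ ε := hδu0.trans hδuε
  have hα : δu * (Sh + Sc) * Nu ≤ ε * 2 * Nu := by
    gcongr
    linarith
  have hδrSh : δr * Nr * Sh ≤ δr * Nr := mul_le_of_le_one_right (by positivity) hSh1
  rcases hregime with hsuε | ⟨hs1ε, hδrε⟩
  · have hβ : su * (δr * Nr * Sh + sr) ≤ ε * (Nr + 1) :=
      mul_le_mul hsuε (by nlinarith) (by positivity) hε
    linarith
  · have hβ : su * (δr * Nr * Sh + sr) ≤ 1 * (ε * Nr + 1) :=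
      mul_le_mul hsu1 (by nlinarith) (by positivity) zero_le_one
    linarith

/-- Quantitative Corollary 1, second part: if `|h_i| ≤ 1` for all `i`, `ε ≥ 0`,
and the gates are within `ε` of constant 0/1 vectors — i.e. one of the following four cases
holds for all `i`: (a) `u(h)_i ≤ ε`; (b) `u(h)_i ≥ 1 - ε` and `r(h)_i ≤ ε`;
(c) `u(h)_i ≥ 1 - ε` and `r(h)_i ≥ 1 - ε`; (d) `u(h)_i ≤ ε` and (`r(h)_i ≥ 1 - ε` or
`r(h)_i ≤ ε`) — then `α + β ≤ 1 + ε (2‖U_u‖₂ + ‖U_r‖₂ + 2)`. -/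
theorem gru_alpha_beta_near_constant_gates {n m : ℕ} (x : Fin m → ℝ)
    (Wr Wu Wc : Matrix (Fin n) (Fin m) ℝ) (Ur Uu Uc : Matrix (Fin n) (Fin n) ℝ)
    (br bu bc : EuclideanSpace ℝ (Fin n)) (h : EuclideanSpace ℝ (Fin n))
    (hh : ∀ i, |h i| ≤ 1) (ε : ℝ) (hε : 0 ≤ ε) :
    let r : EuclideanSpace ℝ (Fin n) → EuclideanSpace ℝ (Fin n) :=
      fun h => WithLp.toLp 2 (fun i => sigmoid (Wr.mulVec x i + Ur.mulVec h i + br i))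
    let u : EuclideanSpace ℝ (Fin n) → EuclideanSpace ℝ (Fin n) :=
      fun h => WithLp.toLp 2 (fun i => sigmoid (Wu.mulVec x i + Uu.mulVec h i + bu i))
    let c : EuclideanSpace ℝ (Fin n) → EuclideanSpace ℝ (Fin n) :=
      fun h => WithLp.toLp 2 (fun i => Real.tanh (Wc.mulVec x i + Uc.mulVec (fun j => r h j * h j) i + bc i))
    let δu : ℝ := ⨆ i, u h i * (1 - u h i)
    let δr : ℝ := ⨆ i, r h i * (1 - r h i)
    let α : ℝ := δu * ((⨆ i, |h i|) + ⨆ i, |c h i|) * opNorm2 Uu + ⨆ i, (1 - u h i)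
    let β : ℝ := (⨆ i, u h i) * (δr * opNorm2 Ur * (⨆ i, |h i|) + ⨆ i, r h i)
    ((∀ i, u h i ≤ ε) ∨
     (∀ i, 1 - ε ≤ u h i ∧ r h i ≤ ε) ∨
     (∀ i, 1 - ε ≤ u h i ∧ 1 - ε ≤ r h i) ∨
     (∀ i, u h i ≤ ε ∧ (1 - ε ≤ r h i ∨ r h i ≤ ε))) →
    α + β ≤ 1 + ε * (2 * opNorm2 Uu + opNorm2 Ur + 2) := by
  intro r u c δu δr α β hgates
  have hu (i : Fin n) : u h i ∈ Icc (0 : ℝ) 1 := sigmoid_mem_Icc _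
  have hr (i : Fin n) : r h i ∈ Icc (0 : ℝ) 1 := sigmoid_mem_Icc _
  have hregime : (∀ i, u h i ≤ ε) ∨ ∀ i, 1 - ε ≤ u h i ∧ (r h i ≤ ε ∨ 1 - ε ≤ r h i) := by
    rcases hgates with hg | hg | hg | hg
    exacts [.inl hg, .inr fun i => ⟨(hg i).1, .inl (hg i).2⟩,
      .inr fun i => ⟨(hg i).1, .inr (hg i).2⟩, .inl fun i => (hg i).1]
  have hu_near (i : Fin n) : u h i ≤ ε ∨ 1 - ε ≤ u h i := by
    rcases hregime with hg | hg
    exacts [.inl (hg i), .inr (hg i).1]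
  have hδu : δu ∈ Icc 0 ε :=
    iSup_mem_Icc_zero hε fun i => mul_one_sub_mem_Icc (hu i) (hu_near i)
  have hδr : δr ∈ Icc (0 : ℝ) 1 :=
    iSup_mem_Icc_zero zero_le_one fun i => mul_one_sub_mem_Icc (hr i) (.inl (hr i).2)
  have hs1 : ⨆ i, (1 - u h i) ≤ 1 := Real.iSup_le (fun i => by linarith [(hu i).1]) zero_le_one
  refine alpha_add_beta_le_of_bounds (norm_nonneg _) (norm_nonneg _)
    (iSup_mem_Icc_zero zero_le_one fun i => ⟨abs_nonneg _, hh i⟩)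
    (iSup_mem_Icc_zero zero_le_one fun i => abs_tanh_mem_Icc _) hδu hδr
    (iSup_mem_Icc_zero zero_le_one hu) (iSup_mem_Icc_zero zero_le_one hr) hs1 ?_
  rcases hregime with hg | hg
  · exact .inl (Real.iSup_le hg hε)
  · exact .inr ⟨Real.iSup_le (fun i => by linarith [(hg i).1]) hε,
      Real.iSup_le (fun i => (mul_one_sub_mem_Icc (hr i) (hg i).2).2) hε⟩
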